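/- Let γ⁰, γ¹, γ², γ³ ∈ M₄(ℂ) satisfy the Clifford relations γ^a γ^b + γ^b γ^a = 2 η^{ab} · 1 with η = diag(1, −1, −1, −1). For smooth ψ : ℝ⁴ → ℂ⁴ (coordinates (t, x¹, x², x³)) define the operators D_0 ψ := i(γ⁰ ∂_t ψ + Σ_j γ^j ∂_j ψ) and, for n ≥ 1, D_n ψ := i (1/n!) (i/2)^n Σ_j γ^j ∂_t^n ∂_j ψ. Then for every n ≥ 0 and every smooth ψ: Σ_{m+k=n} D_m(D_k ψ) = (i^n/n!) ∂_t^n Δψ − [n = 0] ∂_t² ψ, where Δ = ∂_1² + ∂_2² + ∂_3² and [n = 0] is 1 if n = 0 and 0 otherwise. Equivalently, as formal power series in λ of differential operators, the noncommutative Dirac operator D̸ = i(γ⁰ ∂_t + γ^j e^{(iλ/2)∂_t} ∂_j) on κ-Minkowski spacetime satisfies D̸² = −(∂_t² − Δ e^{iλ∂_t}). -/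

import Mathlib

open scoped BigOperators

noncomputable section

/-- Spacetime points `(t, x)` with `t ∈ ℝ` and `x ∈ ℝ³`. -/
abbrev SpacetimePt : Type := ℝ × (Fin 3 → ℝ)

/-- Spinor-valued fields on spacetime `ℝ⁴`. -/
abbrev SpinorField : Type := SpacetimePt → (Fin 4 → ℂ)

/-- The time derivative `∂_t`. -/
def dT (f : SpinorField) : SpinorField :=
  fun p => deriv (fun s => f (s, p.2)) p.1

/-- The spatial partial derivative `∂_j`, `j = 1, 2, 3`. -/
def dSp (j : Fin 3) (f : SpinorField) : SpinorField :=
  fun p => deriv (fun s => f (p.1, Function.update p.2 j s)) (p.2 j)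

/-- The spatial Laplacian `Δ = ∂₁² + ∂₂² + ∂₃²`. -/
def spatialLap (f : SpinorField) : SpinorField :=
  fun p => ∑ j : Fin 3, dSp j (dSp j f) p

/-- The Minkowski metric `η = diag(1, −1, −1, −1)`. -/
def eta4 : Fin 4 → Fin 4 → ℂ :=
  fun a b => if a = b then (if a = 0 then 1 else -1) else 0

/-- The `λⁿ`-coefficient of the noncommutative Dirac operator
`D̸ = i(γ⁰ ∂_t + γ^j e^{(iλ/2)∂_t} ∂_j)` on κ-Minkowski spacetime:
`D₀ψ = i(γ⁰ ∂_t ψ + Σ_j γ^j ∂_j ψ)` and, for `n ≥ 1`,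
`Dₙψ = i (1/n!) (i/2)ⁿ Σ_j γ^j ∂_tⁿ ∂_j ψ`. -/
def diracCoeff (γ : Fin 4 → Matrix (Fin 4) (Fin 4) ℂ) (n : ℕ) (ψ : SpinorField) :
    SpinorField :=
  if n = 0 then
    fun p => Complex.I •
      ((γ 0).mulVec (dT ψ p) + ∑ j : Fin 3, (γ j.succ).mulVec (dSp j ψ p))
  else
    fun p => (Complex.I * ((n.factorial : ℂ))⁻¹ * (Complex.I / 2) ^ n) •
      ∑ j : Fin 3, (γ j.succ).mulVec (dT^[n] (dSp j ψ) p)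

/-! ### Auxiliary machinery -/

namespace KappaAux

open Matrix

/-- Smoothness predicate used internally. -/
abbrev Smooth (f : SpinorField) : Prop := ContDiff ℝ (⊤ : ℕ∞) f

/-- Time direction. -/
def eT : SpacetimePt := (1, 0)

/-- Spatial directions. -/
def eS (j : Fin 3) : SpacetimePt := (0, Pi.single j 1)

/-- `A.mulVec` as a continuous `ℝ`-linear map. -/
def M4L (A : Matrix (Fin 4) (Fin 4) ℂ) : (Fin 4 → ℂ) →L[ℝ] (Fin 4 → ℂ) :=
  LinearMap.toContinuousLinearMap ((A.mulVecLin).restrictScalars ℝ)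

@[simp] lemma M4L_apply (A : Matrix (Fin 4) (Fin 4) ℂ) (x : Fin 4 → ℂ) :
    M4L A x = A.mulVec x := rfl

lemma hasDerivAt_T (f : SpinorField) (p : SpacetimePt) (hf : DifferentiableAt ℝ f p) :
    HasDerivAt (fun s => f (s, p.2)) (fderiv ℝ f p eT) p.1 := by
  have hc : HasDerivAt (fun s : ℝ => ((s, p.2) : SpacetimePt)) eT p.1 :=
    (hasDerivAt_id p.1).prodMk (hasDerivAt_const p.1 p.2)
  have hfp : HasFDerivAt f (fderiv ℝ f p) ((fun s : ℝ => ((s, p.2) : SpacetimePt)) p.1) := by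
    simpa using hf.hasFDerivAt
  exact hfp.comp_hasDerivAt p.1 hc

lemma hasDerivAt_S (j : Fin 3) (f : SpinorField) (p : SpacetimePt)
    (hf : DifferentiableAt ℝ f p) :
    HasDerivAt (fun s => f (p.1, Function.update p.2 j s)) (fderiv ℝ f p (eS j)) (p.2 j) := by
  have hc : HasDerivAt (fun s : ℝ => ((p.1, Function.update p.2 j s) : SpacetimePt))
      (eS j) (p.2 j) :=
    (hasDerivAt_const (p.2 j) p.1).prodMk (hasDerivAt_update p.2 j (p.2 j))
  have hfp : HasFDerivAt f (fderiv ℝ f p)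
      ((fun s : ℝ => ((p.1, Function.update p.2 j s) : SpacetimePt)) (p.2 j)) := by
    simpa [Function.update_eq_self] using hf.hasFDerivAt
  exact hfp.comp_hasDerivAt (p.2 j) hc

lemma dT_apply (f : SpinorField) (p : SpacetimePt) (hf : DifferentiableAt ℝ f p) :
    dT f p = fderiv ℝ f p eT := (hasDerivAt_T f p hf).deriv

lemma dSp_apply (j : Fin 3) (f : SpinorField) (p : SpacetimePt)
    (hf : DifferentiableAt ℝ f p) :
    dSp j f p = fderiv ℝ f p (eS j) := (hasDerivAt_S j f p hf).deriv

lemma contDiff_fderiv_apply (v : SpacetimePt) {f : SpinorField} (hf : Smooth f) :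
    Smooth (fun p => fderiv ℝ f p v) :=
  (ContinuousLinearMap.apply ℝ (Fin 4 → ℂ) v).contDiff.comp (hf.fderiv_right (by simp))

lemma dT_eq {f : SpinorField} (hf : Smooth f) :
    dT f = fun p => fderiv ℝ f p eT :=
  funext fun p => dT_apply f p (hf.differentiable (by norm_cast)).differentiableAt

lemma dSp_eq (j : Fin 3) {f : SpinorField} (hf : Smooth f) :
    dSp j f = fun p => fderiv ℝ f p (eS j) :=
  funext fun p => dSp_apply j f p (hf.differentiable (by norm_cast)).differentiableAt

lemma smooth_dT {f : SpinorField} (hf : Smooth f) : Smooth (dT f) := by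
  rw [dT_eq hf]; exact contDiff_fderiv_apply eT hf

lemma smooth_dSp (j : Fin 3) {f : SpinorField} (hf : Smooth f) : Smooth (dSp j f) := by
  rw [dSp_eq j hf]; exact contDiff_fderiv_apply (eS j) hf

lemma smooth_dT_iter (n : ℕ) {f : SpinorField} (hf : Smooth f) : Smooth (dT^[n] f) := by
  induction n with
  | zero => exact hf
  | succ n ih => rw [Function.iterate_succ_apply']; exact smooth_dT ih

/-- Symmetry of the second derivative, in directional form. -/
lemma fderiv_swap {f : SpinorField} (hf : Smooth f) (v w : SpacetimePt) (p : SpacetimePt) :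
    fderiv ℝ (fun q => fderiv ℝ f q w) p v = fderiv ℝ (fun q => fderiv ℝ f q v) p w := by
  have hdf : DifferentiableAt ℝ (fderiv ℝ f) p := by
    have h1 : ContDiff ℝ (⊤ : ℕ∞) (fderiv ℝ f) := hf.fderiv_right (by exact_mod_cast le_rfl)
    exact (h1.differentiable (by norm_cast)).differentiableAt
  have key : ∀ u : SpacetimePt,
      fderiv ℝ (fun q => fderiv ℝ f q u) p =
        (ContinuousLinearMap.apply ℝ (Fin 4 → ℂ) u).comp (fderiv ℝ (fderiv ℝ f) p) := by
    intro u
    exact ((ContinuousLinearMap.apply ℝ (Fin 4 → ℂ) u).hasFDerivAt.comp p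
      hdf.hasFDerivAt).fderiv
  rw [key v, key w]
  have hs := (hf.contDiffAt (x := p)).isSymmSndFDerivAt (n := ((⊤ : ℕ∞) : WithTop ℕ∞)) (by rw [minSmoothness_of_isRCLikeNormedField]; exact WithTop.coe_le_coe.mpr (le_top : (2 : ℕ∞) ≤ ⊤))
  simp only [ContinuousLinearMap.coe_comp', Function.comp_apply,
    ContinuousLinearMap.apply_apply]
  exact hs v w

lemma dT_dSp_comm (j : Fin 3) {f : SpinorField} (hf : Smooth f) :
    dSp j (dT f) = dT (dSp j f) := by
  funext p
  rw [dSp_eq j (smooth_dT hf), dT_eq hf, dT_eq (smooth_dSp j hf), dSp_eq j hf]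
  exact fderiv_swap hf (eS j) eT p

lemma dSp_dSp_comm (j l : Fin 3) {f : SpinorField} (hf : Smooth f) :
    dSp j (dSp l f) = dSp l (dSp j f) := by
  funext p
  rw [dSp_eq j (smooth_dSp l hf), dSp_eq l hf, dSp_eq l (smooth_dSp j hf), dSp_eq j hf]
  exact fderiv_swap hf (eS j) (eS l) p

lemma dSp_dT_iter_comm (n : ℕ) (j : Fin 3) {f : SpinorField} (hf : Smooth f) :
    dSp j (dT^[n] f) = dT^[n] (dSp j f) := by
  induction n with
  | zero => rfl
  | succ n ih =>
    rw [Function.iterate_succ_apply', dT_dSp_comm j (smooth_dT_iter n hf),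
      Function.iterate_succ_apply', ih]

/-! The "normal form" of the Dirac coefficients. -/

/-- `NF A B u w = A u + Σ_j B_j w_j` pointwise. -/
def NF (A : Matrix (Fin 4) (Fin 4) ℂ) (B : Fin 3 → Matrix (Fin 4) (Fin 4) ℂ)
    (u : SpinorField) (w : Fin 3 → SpinorField) : SpinorField :=
  fun p => A.mulVec (u p) + ∑ j : Fin 3, (B j).mulVec (w j p)

lemma smooth_NF {A B u w} (hu : Smooth u) (hw : ∀ j, Smooth (w j)) :
    Smooth (NF A B u w) := by
  have h1 : Smooth (fun p => (M4L A) (u p)) := (M4L A).contDiff.comp hu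
  have h2 : Smooth (fun p => ∑ j : Fin 3, (M4L (B j)) (w j p)) :=
    ContDiff.sum fun j _ => (M4L (B j)).contDiff.comp (hw j)
  exact h1.add h2

lemma dT_NF {A B u w} (hu : Smooth u) (hw : ∀ j, Smooth (w j)) :
    dT (NF A B u w) = NF A B (dT u) (fun j => dT (w j)) := by
  funext p
  have hd : ∀ g : SpinorField, Smooth g → HasDerivAt (fun s => g (s, p.2)) (dT g p) p.1 := by
    intro g hg
    rw [dT_apply g p (hg.differentiable (by norm_cast)).differentiableAt]
    exact hasDerivAt_T g p (hg.differentiable (by norm_cast)).differentiableAt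
  have h1 : HasDerivAt (fun s => (M4L A) (u (s, p.2))) (A.mulVec (dT u p)) p.1 :=
    (M4L A).hasFDerivAt.comp_hasDerivAt p.1 (hd u hu)
  have h2 : HasDerivAt (fun s => ∑ j : Fin 3, (M4L (B j)) (w j (s, p.2)))
      (∑ j : Fin 3, (B j).mulVec (dT (w j) p)) p.1 :=
    HasDerivAt.fun_sum fun j _ => (M4L (B j)).hasFDerivAt.comp_hasDerivAt p.1 (hd (w j) (hw j))
  have := (h1.fun_add h2).deriv
  simpa [NF, dT] using this

lemma dSp_NF (l : Fin 3) {A B u w} (hu : Smooth u) (hw : ∀ j, Smooth (w j)) :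
    dSp l (NF A B u w) = NF A B (dSp l u) (fun j => dSp l (w j)) := by
  funext p
  have hd : ∀ g : SpinorField, Smooth g →
      HasDerivAt (fun s => g (p.1, Function.update p.2 l s)) (dSp l g p) (p.2 l) := by
    intro g hg
    rw [dSp_apply l g p (hg.differentiable (by norm_cast)).differentiableAt]
    exact hasDerivAt_S l g p (hg.differentiable (by norm_cast)).differentiableAt
  have h1 : HasDerivAt (fun s => (M4L A) (u (p.1, Function.update p.2 l s)))
      (A.mulVec (dSp l u p)) (p.2 l) :=
    (M4L A).hasFDerivAt.comp_hasDerivAt (p.2 l) (hd u hu)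
  have h2 : HasDerivAt (fun s => ∑ j : Fin 3, (M4L (B j)) (w j (p.1, Function.update p.2 l s)))
      (∑ j : Fin 3, (B j).mulVec (dSp l (w j) p)) (p.2 l) :=
    HasDerivAt.fun_sum fun j _ => (M4L (B j)).hasFDerivAt.comp_hasDerivAt (p.2 l) (hd (w j) (hw j))
  have := (h1.fun_add h2).deriv
  simpa [NF, dSp] using this

lemma dT_iter_NF (n : ℕ) {A B u w} (hu : Smooth u) (hw : ∀ j, Smooth (w j)) :
    dT^[n] (NF A B u w) = NF A B (dT^[n] u) (fun j => dT^[n] (w j)) := by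
  induction n with
  | zero => rfl
  | succ n ih =>
    rw [Function.iterate_succ_apply', ih, dT_NF (smooth_dT_iter n hu)
      (fun j => smooth_dT_iter n (hw j))]
    have e : (fun j => dT (dT^[n] (w j))) = fun j => dT^[n + 1] (w j) :=
      funext fun j => (Function.iterate_succ_apply' dT n (w j)).symm
    rw [e, Function.iterate_succ_apply']

/-! Normal form of `diracCoeff`. -/

/-- The scalar coefficient. -/
def cI (k : ℕ) : ℂ := Complex.I * (((k.factorial : ℂ))⁻¹ * (Complex.I / 2) ^ k)

/-- The time-part matrix. -/
def Am (γ : Fin 4 → Matrix (Fin 4) (Fin 4) ℂ) (k : ℕ) : Matrix (Fin 4) (Fin 4) ℂ :=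
  if k = 0 then Complex.I • γ 0 else 0

/-- The space-part matrices. -/
def Bm (γ : Fin 4 → Matrix (Fin 4) (Fin 4) ℂ) (k : ℕ) (j : Fin 3) :
    Matrix (Fin 4) (Fin 4) ℂ := cI k • γ j.succ

lemma diracCoeff_nf (γ : Fin 4 → Matrix (Fin 4) (Fin 4) ℂ) (k : ℕ) (ψ : SpinorField) :
    diracCoeff γ k ψ = NF (Am γ k) (Bm γ k) (dT ψ) (fun j => dT^[k] (dSp j ψ)) := by
  unfold diracCoeff NF Am Bm cI
  rcases Nat.eq_zero_or_pos k with hk | hk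
  · subst hk
    simp [smul_add, Finset.smul_sum, Matrix.smul_mulVec]
  · rw [if_neg hk.ne', if_neg hk.ne']
    funext p
    rw [Matrix.zero_mulVec, zero_add, Finset.smul_sum]
    refine Finset.sum_congr rfl fun j _ => ?_
    simp [Matrix.smul_mulVec, mul_assoc]

lemma smooth_diracCoeff (γ : Fin 4 → Matrix (Fin 4) (Fin 4) ℂ) (k : ℕ) {ψ : SpinorField}
    (hψ : Smooth ψ) : Smooth (diracCoeff γ k ψ) := by
  rw [diracCoeff_nf]
  exact smooth_NF (smooth_dT hψ) fun j => smooth_dT_iter k (smooth_dSp j hψ)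

lemma mulVec_sum {ι : Type*} (A : Matrix (Fin 4) (Fin 4) ℂ) (s : Finset ι)
    (v : ι → Fin 4 → ℂ) : A.mulVec (∑ i ∈ s, v i) = ∑ i ∈ s, A.mulVec (v i) :=
  map_sum A.mulVecLin v s

set_option maxHeartbeats 1000000 in
/-- The key pointwise formula for a product of two Dirac coefficients. -/
lemma key (γ : Fin 4 → Matrix (Fin 4) (Fin 4) ℂ) (m k : ℕ) {ψ : SpinorField}
    (hψ : Smooth ψ) (p : SpacetimePt) :
    diracCoeff γ m (diracCoeff γ k ψ) p =
      (Am γ m * Am γ k).mulVec (dT (dT ψ) p)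
      + ∑ j : Fin 3, (Am γ m * Bm γ k j).mulVec (dT^[k + 1] (dSp j ψ) p)
      + ∑ l : Fin 3, (Bm γ m l * Am γ k).mulVec (dT^[m + 1] (dSp l ψ) p)
      + ∑ l : Fin 3, ∑ j : Fin 3,
          (Bm γ m l * Bm γ k j).mulVec (dT^[m + k] (dSp l (dSp j ψ)) p) := by
  have hu : Smooth (dT ψ) := smooth_dT hψ
  have hw : ∀ j, Smooth (dT^[k] (dSp j ψ)) := fun j => smooth_dT_iter k (smooth_dSp j hψ)
  rw [diracCoeff_nf γ m, diracCoeff_nf γ k]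
  -- compute dT of the inner normal form
  have hdT : dT (NF (Am γ k) (Bm γ k) (dT ψ) (fun j => dT^[k] (dSp j ψ)))
      = NF (Am γ k) (Bm γ k) (dT (dT ψ)) (fun j => dT^[k + 1] (dSp j ψ)) := by
    rw [dT_NF hu hw]
    have e : (fun j => dT (dT^[k] (dSp j ψ))) = fun j => dT^[k + 1] (dSp j ψ) :=
      funext fun j => (Function.iterate_succ_apply' dT k (dSp j ψ)).symm
    rw [e]
  -- compute dT^[m] ∘ dSp l of the inner normal form
  have hdS : ∀ l : Fin 3, dT^[m] (dSp l (NF (Am γ k) (Bm γ k) (dT ψ)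
        (fun j => dT^[k] (dSp j ψ))))
      = NF (Am γ k) (Bm γ k) (dT^[m + 1] (dSp l ψ))
        (fun j => dT^[m + k] (dSp l (dSp j ψ))) := by
    intro l
    rw [dSp_NF l hu hw]
    have e1 : dSp l (dT ψ) = dT (dSp l ψ) := dT_dSp_comm l hψ
    have e2 : ∀ j : Fin 3, dSp l (dT^[k] (dSp j ψ)) = dT^[k] (dSp l (dSp j ψ)) := by
      intro j
      rw [dSp_dT_iter_comm k l (smooth_dSp j hψ), dSp_dSp_comm]
      exact hψ
    simp only [e1]
    rw [show (fun j => dSp l (dT^[k] (dSp j ψ))) = fun j => dT^[k] (dSp l (dSp j ψ)) from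
      funext e2]
    rw [dT_iter_NF m (smooth_dT (smooth_dSp l hψ))
      (fun j => smooth_dT_iter k (smooth_dSp l (smooth_dSp j hψ)))]
    have e3 : dT^[m] (dT (dSp l ψ)) = dT^[m + 1] (dSp l ψ) :=
      (Function.iterate_succ_apply dT m (dSp l ψ)).symm
    have e4 : (fun j => dT^[m] (dT^[k] (dSp l (dSp j ψ))))
        = fun j => dT^[m + k] (dSp l (dSp j ψ)) :=
      funext fun j => (Function.iterate_add_apply dT m k (dSp l (dSp j ψ))).symm
    rw [e3, e4]
  conv_lhs => rw [NF]
  rw [hdT]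
  simp only [hdS]
  simp only [NF, Matrix.mulVec_add, Matrix.mulVec_mulVec]
  rw [Finset.sum_add_distrib]
  have hAsum : Am γ m *ᵥ ∑ j : Fin 3, Bm γ k j *ᵥ dT^[k + 1] (dSp j ψ) p
      = ∑ j : Fin 3, (Am γ m * Bm γ k j) *ᵥ dT^[k + 1] (dSp j ψ) p := by
    rw [mulVec_sum]
    exact Finset.sum_congr rfl fun j _ => Matrix.mulVec_mulVec _ _ _
  have hBsum : ∀ l : Fin 3, Bm γ m l *ᵥ ∑ j : Fin 3, Bm γ k j *ᵥ dT^[m + k] (dSp l (dSp j ψ)) p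
      = ∑ j : Fin 3, (Bm γ m l * Bm γ k j) *ᵥ dT^[m + k] (dSp l (dSp j ψ)) p := by
    intro l
    rw [mulVec_sum]
    exact Finset.sum_congr rfl fun j _ => Matrix.mulVec_mulVec _ _ _
  rw [hAsum]
  simp only [hBsum]
  abel

/-! ### Algebraic helpers -/

lemma smul_mul_smul' (a b : ℂ) (A B : Matrix (Fin 4) (Fin 4) ℂ) :
    (a • A) * (b • B) = (a * b) • (A * B) := by
  rw [smul_mul_assoc, Matrix.mul_smul, smul_smul]

lemma gamma_sq {γ : Fin 4 → Matrix (Fin 4) (Fin 4) ℂ}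
    (hγ : ∀ a b : Fin 4, γ a * γ b + γ b * γ a = (2 * eta4 a b) • 1) (a : Fin 4) :
    γ a * γ a = eta4 a a • 1 := by
  have h := hγ a a
  have h2 : (2 : ℂ) • (γ a * γ a) = (2 : ℂ) • (eta4 a a • (1 : Matrix (Fin 4) (Fin 4) ℂ)) := by
    rw [two_smul, h, mul_smul]
  exact smul_right_injective _ (two_ne_zero) h2

lemma gamma0_anti {γ : Fin 4 → Matrix (Fin 4) (Fin 4) ℂ}
    (hγ : ∀ a b : Fin 4, γ a * γ b + γ b * γ a = (2 * eta4 a b) • 1) (j : Fin 3) :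
    γ 0 * γ j.succ + γ j.succ * γ 0 = 0 := by
  rw [hγ 0 j.succ]
  have : eta4 0 j.succ = 0 := by
    simp [eta4, (Fin.succ_ne_zero j).symm]
  rw [this, mul_zero, zero_smul]

lemma eta_succ (l j : Fin 3) : eta4 l.succ j.succ = if l = j then -1 else 0 := by
  simp only [eta4, Fin.succ_inj, Fin.succ_ne_zero, if_false]

lemma sym_sum {γ : Fin 4 → Matrix (Fin 4) (Fin 4) ℂ}
    (hγ : ∀ a b : Fin 4, γ a * γ b + γ b * γ a = (2 * eta4 a b) • 1)
    (u : Fin 3 → Fin 3 → (Fin 4 → ℂ)) (hu : ∀ l j, u l j = u j l) :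
    ∑ l : Fin 3, ∑ j : Fin 3, (γ l.succ * γ j.succ).mulVec (u l j)
      = -∑ l : Fin 3, u l l := by
  have hswap : ∑ l : Fin 3, ∑ j : Fin 3, (γ j.succ * γ l.succ).mulVec (u l j)
      = ∑ l : Fin 3, ∑ j : Fin 3, (γ l.succ * γ j.succ).mulVec (u l j) := by
    rw [Finset.sum_comm]
    exact Finset.sum_congr rfl fun l _ => Finset.sum_congr rfl fun j _ => by rw [hu j l]
  have h2 : (2 : ℂ) • (∑ l : Fin 3, ∑ j : Fin 3, (γ l.succ * γ j.succ).mulVec (u l j))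
      = (2 : ℂ) • (-∑ l : Fin 3, u l l) := by
    rw [two_smul]
    nth_rewrite 2 [← hswap]
    rw [← Finset.sum_add_distrib]
    have step : ∀ l : Fin 3,
        (∑ j : Fin 3, (γ l.succ * γ j.succ).mulVec (u l j))
          + ∑ j : Fin 3, (γ j.succ * γ l.succ).mulVec (u l j)
        = (-2 : ℂ) • u l l := by
      intro l
      rw [← Finset.sum_add_distrib]
      have : ∀ j : Fin 3,
          (γ l.succ * γ j.succ).mulVec (u l j) + (γ j.succ * γ l.succ).mulVec (u l j)
            = if l = j then (-2 : ℂ) • u l j else 0 := by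
        intro j
        rw [← Matrix.add_mulVec, hγ l.succ j.succ, eta_succ, Matrix.smul_mulVec,
          Matrix.one_mulVec]
        split_ifs with h
        · norm_num
        · simp
      simp only [this]
      simp
    simp only [step]
    rw [← Finset.smul_sum, smul_neg, neg_smul]
  exact smul_right_injective _ (two_ne_zero) h2

lemma sum_cI (n : ℕ) :
    ∑ m ∈ Finset.range (n + 1), cI m * cI (n - m)
      = -(Complex.I ^ n * ((n.factorial : ℂ))⁻¹) := by
  have hterm : ∀ m ∈ Finset.range (n + 1),
      cI m * cI (n - m)
        = -((n.choose m : ℂ) * ((n.factorial : ℂ))⁻¹ * (Complex.I / 2) ^ n) := by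
    intro m hm
    have hm' : m ≤ n := Nat.lt_succ_iff.mp (Finset.mem_range.mp hm)
    have hpow : (Complex.I / 2) ^ m * (Complex.I / 2) ^ (n - m) = (Complex.I / 2) ^ n := by
      rw [← pow_add, Nat.add_sub_cancel' hm']
    have hc : (n.choose m : ℂ) = (n.factorial : ℂ) /
        ((m.factorial : ℂ) * ((n - m).factorial : ℂ)) := Nat.cast_choose ℂ hm'
    have h1 : cI m * cI (n - m)
        = -(((m.factorial : ℂ))⁻¹ * (((n - m).factorial : ℂ))⁻¹ * (Complex.I / 2) ^ n) := by
      unfold cI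
      have : Complex.I * Complex.I = -1 := Complex.I_mul_I
      calc Complex.I * (((m.factorial : ℂ))⁻¹ * (Complex.I / 2) ^ m) *
            (Complex.I * ((((n - m).factorial : ℂ))⁻¹ * (Complex.I / 2) ^ (n - m)))
          = (Complex.I * Complex.I) * (((m.factorial : ℂ))⁻¹ * (((n - m).factorial : ℂ))⁻¹) *
              ((Complex.I / 2) ^ m * (Complex.I / 2) ^ (n - m)) := by ring
        _ = -(((m.factorial : ℂ))⁻¹ * (((n - m).factorial : ℂ))⁻¹ * (Complex.I / 2) ^ n) := by
            rw [this, hpow]; ring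
    rw [h1, hc]
    have h2 : ((m.factorial : ℂ)) ≠ 0 := Nat.cast_ne_zero.mpr m.factorial_ne_zero
    have h3 : (((n - m).factorial : ℂ)) ≠ 0 := Nat.cast_ne_zero.mpr (n - m).factorial_ne_zero
    have h4 : ((n.factorial : ℂ)) ≠ 0 := Nat.cast_ne_zero.mpr n.factorial_ne_zero
    field_simp
  rw [Finset.sum_congr rfl hterm]
  have hch : ∑ m ∈ Finset.range (n + 1), ((n.choose m : ℂ)) = (2 : ℂ) ^ n := by
    have := Nat.sum_range_choose n
    exact_mod_cast congrArg (fun x : ℕ => (x : ℂ)) this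
  rw [Finset.sum_neg_distrib, ← Finset.sum_mul, ← Finset.sum_mul, hch]
  rw [neg_inj, div_pow]
  have h2 : ((2 : ℂ)) ^ n ≠ 0 := pow_ne_zero n two_ne_zero
  have h4 : ((n.factorial : ℂ)) ≠ 0 := Nat.cast_ne_zero.mpr n.factorial_ne_zero
  field_simp


end KappaAux

/-- For gamma-matrices satisfying the Clifford relations with
`η = diag(1,−1,−1,−1)`, the square of the noncommutative Dirac operator on κ-Minkowski
spacetime is the deformed wave operator `−□ = −(∂_t² − Δ e^{iλ∂_t})`, order by order in the
deformation parameter: for every `n` and every smooth `ψ`,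
`Σ_{m+k=n} D_m(D_k ψ) = (iⁿ/n!) ∂_tⁿ Δψ − [n = 0] ∂_t² ψ`. -/
theorem dirac_square_kappa_minkowski
    (γ : Fin 4 → Matrix (Fin 4) (Fin 4) ℂ)
    (hγ : ∀ a b : Fin 4, γ a * γ b + γ b * γ a = (2 * eta4 a b) • 1) :
    ∀ (n : ℕ) (ψ : SpinorField), ContDiff ℝ (⊤ : ℕ∞) ψ → ∀ p : SpacetimePt,
      ∑ q ∈ Finset.HasAntidiagonal.antidiagonal n, diracCoeff γ q.1 (diracCoeff γ q.2 ψ) p =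
        (Complex.I ^ n / (n.factorial : ℂ)) • dT^[n] (spatialLap ψ) p -
          (if n = 0 then dT (dT ψ) p else 0) := by
  intro n ψ hψ' p
  open KappaAux in
  have hψ : Smooth ψ := hψ'.of_le (by simp)
  -- abbreviations
  set u : Fin 3 → Fin 3 → (Fin 4 → ℂ) := fun l j => dT^[n] (dSp l (dSp j ψ)) p with hu_def
  have hu : ∀ l j, u l j = u j l := by
    intro l j
    simp only [hu_def]
    rw [dSp_dSp_comm l j hψ]
  -- rewrite the antidiagonal sum as a range sum of the key formula
  have hsum : ∑ q ∈ Finset.HasAntidiagonal.antidiagonal n, diracCoeff γ q.1 (diracCoeff γ q.2 ψ) p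
      = ∑ m ∈ Finset.range (n + 1),
          ((Am γ m * Am γ (n - m)).mulVec (dT (dT ψ) p)
          + ∑ j : Fin 3, (Am γ m * Bm γ (n - m) j).mulVec (dT^[(n - m) + 1] (dSp j ψ) p)
          + ∑ l : Fin 3, (Bm γ m l * Am γ (n - m)).mulVec (dT^[m + 1] (dSp l ψ) p)
          + ∑ l : Fin 3, ∑ j : Fin 3, (Bm γ m l * Bm γ (n - m) j).mulVec (u l j)) := by
    rw [Finset.Nat.sum_antidiagonal_eq_sum_range_succ_mk]
    refine Finset.sum_congr rfl fun m hm => ?_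
    have hm' : m ≤ n := Nat.lt_succ_iff.mp (Finset.mem_range.mp hm)
    refine (key γ m (n - m) hψ p).trans ?_
    rw [Nat.add_sub_cancel' hm']
  rw [hsum, Finset.sum_add_distrib, Finset.sum_add_distrib, Finset.sum_add_distrib]
  -- the four pieces
  have hS1 : ∑ m ∈ Finset.range (n + 1), (Am γ m * Am γ (n - m)).mulVec (dT (dT ψ) p)
      = if n = 0 then -(dT (dT ψ) p) else 0 := by
    rcases Nat.eq_zero_or_pos n with hn | hn
    · subst hn
      rw [if_pos rfl, Finset.sum_range_one]
      have hA0 : Am γ (0 - 0) = Complex.I • γ 0 := if_pos rfl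
      rw [hA0, smul_mul_smul', Complex.I_mul_I, gamma_sq hγ 0]
      have : eta4 0 0 = 1 := by simp [eta4]
      rw [this, one_smul, Matrix.smul_mulVec, Matrix.one_mulVec, neg_smul, one_smul]
    · rw [if_neg hn.ne']
      refine Finset.sum_eq_zero fun m hm => ?_
      rcases Nat.eq_zero_or_pos m with hm0 | hm0
      · subst hm0
        have : Am γ (n - 0) = 0 := by simp [Am, hn.ne']
        rw [this, mul_zero, Matrix.zero_mulVec]
      · have : Am γ m = 0 := by simp [Am, hm0.ne']
        rw [this, zero_mul, Matrix.zero_mulVec]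
  have hS2 : ∑ m ∈ Finset.range (n + 1),
        ∑ j : Fin 3, (Am γ m * Bm γ (n - m) j).mulVec (dT^[(n - m) + 1] (dSp j ψ) p)
      = ∑ j : Fin 3, ((Complex.I • γ 0) * Bm γ n j).mulVec (dT^[n + 1] (dSp j ψ) p) := by
    rw [Finset.sum_eq_single_of_mem 0 (Finset.mem_range.mpr n.succ_pos)]
    · simp [Am]
    · intro m _ hm0
      refine Finset.sum_eq_zero fun j _ => ?_
      have : Am γ m = 0 := by simp [Am, hm0]
      rw [this, zero_mul, Matrix.zero_mulVec]
  have hS3 : ∑ m ∈ Finset.range (n + 1),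
        ∑ l : Fin 3, (Bm γ m l * Am γ (n - m)).mulVec (dT^[m + 1] (dSp l ψ) p)
      = ∑ l : Fin 3, (Bm γ n l * (Complex.I • γ 0)).mulVec (dT^[n + 1] (dSp l ψ) p) := by
    rw [Finset.sum_eq_single_of_mem n (Finset.mem_range.mpr n.lt_succ_self)]
    · simp [Am]
    · intro m hm hmn
      have hlt : m < n := lt_of_le_of_ne (Nat.lt_succ_iff.mp (Finset.mem_range.mp hm)) hmn
      refine Finset.sum_eq_zero fun l _ => ?_
      have : Am γ (n - m) = 0 := by simp [Am, (Nat.sub_ne_zero_of_lt hlt)]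
      rw [this, mul_zero, Matrix.zero_mulVec]
  have hS23 : (∑ j : Fin 3, ((Complex.I • γ 0) * Bm γ n j).mulVec (dT^[n + 1] (dSp j ψ) p))
      + ∑ l : Fin 3, (Bm γ n l * (Complex.I • γ 0)).mulVec (dT^[n + 1] (dSp l ψ) p) = 0 := by
    rw [← Finset.sum_add_distrib]
    refine Finset.sum_eq_zero fun j _ => ?_
    rw [← Matrix.add_mulVec]
    have : (Complex.I • γ 0) * Bm γ n j + Bm γ n j * (Complex.I • γ 0) = 0 := by
      unfold Bm
      rw [smul_mul_smul', smul_mul_smul', mul_comm (cI n) Complex.I, ← smul_add,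
        gamma0_anti hγ j, smul_zero]
    rw [this, Matrix.zero_mulVec]
  have hS4 : ∑ m ∈ Finset.range (n + 1),
        ∑ l : Fin 3, ∑ j : Fin 3, (Bm γ m l * Bm γ (n - m) j).mulVec (u l j)
      = (Complex.I ^ n * ((n.factorial : ℂ))⁻¹) • ∑ l : Fin 3, u l l := by
    have step : ∀ m ∈ Finset.range (n + 1),
        ∑ l : Fin 3, ∑ j : Fin 3, (Bm γ m l * Bm γ (n - m) j).mulVec (u l j)
          = (cI m * cI (n - m)) • ∑ l : Fin 3, ∑ j : Fin 3,
              (γ l.succ * γ j.succ).mulVec (u l j) := by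
      intro m _
      rw [Finset.smul_sum]
      refine Finset.sum_congr rfl fun l _ => ?_
      rw [Finset.smul_sum]
      refine Finset.sum_congr rfl fun j _ => ?_
      rw [Bm, Bm, smul_mul_smul', Matrix.smul_mulVec]
    rw [Finset.sum_congr rfl step, ← Finset.sum_smul, sum_cI n, sym_sum hγ u hu]
    rw [neg_smul, smul_neg, neg_neg]
  rw [hS1, hS2, hS3, hS4, add_assoc (if n = 0 then -(dT (dT ψ) p) else 0), hS23, add_zero]
  -- the Laplacian term
  have hLap : dT^[n] (spatialLap ψ) p = ∑ l : Fin 3, u l l := by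
    have hnf : spatialLap ψ
        = NF 0 (fun _ => (1 : Matrix (Fin 4) (Fin 4) ℂ)) ψ (fun l => dSp l (dSp l ψ)) := by
      funext q
      simp [NF, spatialLap, Matrix.zero_mulVec, Matrix.one_mulVec]
    rw [hnf, dT_iter_NF n hψ (fun l => smooth_dSp l (smooth_dSp l hψ))]
    simp [NF, Matrix.zero_mulVec, Matrix.one_mulVec, hu_def]
  rw [hLap, div_eq_mul_inv]
  split_ifs with hn
  · abel
  · simp
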